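/- Let $\mathfrak{g}$ be a finite-dimensional complex Lie algebra with a Hermitian real inner product $\langle\cdot,\cdot\rangle$, center $\mathfrak{z}$, $\mathfrak{v} = \mathfrak{z}^\perp$, and $J$ defined as usual. Fix $z \in \mathfrak{z}$ with $\|z\| = 1$ and suppose $J_z : \mathfrak{v} \to \mathfrak{v}$ is an isometry. Then for every $w \in \mathfrak{z}$ of the form $w = \alpha z$ with $\alpha \in \mathbb{C}$ and $|\alpha| = 1$ (equivalently $\|w\| = 1$), the map $J_w : \mathfrak{v} \to \mathfrak{v}$ is also an isometry. -/

import Mathlib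

open scoped RealInnerProductSpace ComplexConjugate

attribute [-instance] LieRing.toAddCommGroup

/-!
Since the inner product is Hermitian, multiplication by `i` is skew-adjoint, so the real adjoint
of multiplication by `α ∈ ℂ` is multiplication by `conj α`, and `𝔳` is a complex subspace. Hence
`⟪J_{αz} u, v⟫ = ⟪αz, [u, v]⟫ = ⟪z, [conj α • u, v]⟫ = ⟪J_z (conj α • u), v⟫`, i.e.
`J_{αz} = J_z ∘ (conj α •)`, a composition of two isometries of `𝔳` when `|α| = 1`.
-/

section HermitianRealInner

variable {E : Type*} [NormedAddCommGroup E] [InnerProductSpace ℝ E] [Module ℂ E]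

theorem real_inner_I_smul_left
    (hherm : ∀ x y : E, ⟪(Complex.I : ℂ) • x, (Complex.I : ℂ) • y⟫ = ⟪x, y⟫) (x y : E) :
    ⟪(Complex.I : ℂ) • x, y⟫ = -⟪x, (Complex.I : ℂ) • y⟫ := by
  have h := hherm x ((Complex.I : ℂ) • y)
  rw [smul_smul, Complex.I_mul_I, neg_one_smul, inner_neg_right] at h
  rw [← h, neg_neg]

variable [IsScalarTower ℝ ℂ E]

theorem real_inner_ofReal_smul_left (r : ℝ) (x y : E) : ⟪(r : ℂ) • x, y⟫ = r * ⟪x, y⟫ := by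
  rw [← real_inner_smul_left, ← smul_one_smul ℂ r x, Complex.real_smul, mul_one]

theorem real_inner_ofReal_smul_right (r : ℝ) (x y : E) : ⟪x, (r : ℂ) • y⟫ = r * ⟪x, y⟫ := by
  rw [real_inner_comm, real_inner_ofReal_smul_left, real_inner_comm]

theorem real_inner_smul_left_eq_inner_conj_smul_right
    (hherm : ∀ x y : E, ⟪(Complex.I : ℂ) • x, (Complex.I : ℂ) • y⟫ = ⟪x, y⟫) (α : ℂ) (x y : E) :
    ⟪α • x, y⟫ = ⟪x, conj α • y⟫ := by
  have hconj : conj α = (α.re : ℂ) + ((-α.im : ℝ) : ℂ) * Complex.I := by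
    apply Complex.ext <;> simp
  conv_lhs => rw [← Complex.re_add_im α]
  rw [hconj, add_smul, add_smul, mul_smul, mul_smul, inner_add_left, inner_add_right,
    real_inner_ofReal_smul_left, real_inner_ofReal_smul_left, real_inner_ofReal_smul_right,
    real_inner_ofReal_smul_right, real_inner_I_smul_left hherm]
  ring

theorem real_inner_smul_smul_of_norm_eq_one
    (hherm : ∀ x y : E, ⟪(Complex.I : ℂ) • x, (Complex.I : ℂ) • y⟫ = ⟪x, y⟫)
    {α : ℂ} (hα : ‖α‖ = 1) (x y : E) :
    ⟪α • x, α • y⟫ = ⟪x, y⟫ := by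
  rw [real_inner_smul_left_eq_inner_conj_smul_right hherm, smul_smul,
    ← Complex.normSq_eq_conj_mul_self, Complex.normSq_eq_norm_sq, hα]
  simp

theorem Submodule.smul_mem_orthogonal_restrictScalars
    (hherm : ∀ x y : E, ⟪(Complex.I : ℂ) • x, (Complex.I : ℂ) • y⟫ = ⟪x, y⟫)
    (K : Submodule ℂ E) (c : ℂ) {x : E}
    (hx : x ∈ (K.restrictScalars ℝ)ᗮ) : c • x ∈ (K.restrictScalars ℝ)ᗮ := by
  intro w hw
  rw [← Complex.conj_conj c, ← real_inner_smul_left_eq_inner_conj_smul_right hherm]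
  exact hx _ (K.smul_mem (conj c) hw)

end HermitianRealInner

theorem Submodule.eq_of_forall_real_inner_eq {E : Type*} [NormedAddCommGroup E]
    [InnerProductSpace ℝ E] (K : Submodule ℝ E) {p q : E} (hp : p ∈ K) (hq : q ∈ K)
    (h : ∀ y ∈ K, ⟪p, y⟫ = ⟪q, y⟫) : p = q := by
  rw [← sub_eq_zero, ← inner_self_eq_zero (𝕜 := ℝ), inner_sub_left, h _ (K.sub_mem hp hq),
    sub_self]

theorem J_smul_apply_eq_J_apply_conj_smul {G : Type*} [LieRing G]
    [NormedAddCommGroup G] [InnerProductSpace ℝ G] [Module ℂ G] [IsScalarTower ℝ ℂ G]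
    (hbil : ∀ (a : ℂ) (x y : G), ⁅a • x, y⁆ = a • ⁅x, y⁆)
    (hherm : ∀ x y : G, ⟪(Complex.I : ℂ) • x, (Complex.I : ℂ) • y⟫ = ⟪x, y⟫)
    (𝔷 : Submodule ℂ G) (J : G → G → G)
    (hJmem : ∀ z ∈ 𝔷, ∀ u ∈ (𝔷.restrictScalars ℝ)ᗮ, J z u ∈ (𝔷.restrictScalars ℝ)ᗮ)
    (hJdef : ∀ z ∈ 𝔷, ∀ u ∈ (𝔷.restrictScalars ℝ)ᗮ, ∀ v ∈ (𝔷.restrictScalars ℝ)ᗮ,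
      ⟪J z u, v⟫ = ⟪z, ⁅u, v⁆⟫)
    {z : G} (hz : z ∈ 𝔷) (α : ℂ) {u : G} (hu : u ∈ (𝔷.restrictScalars ℝ)ᗮ) :
    J (α • z) u = J z (conj α • u) := by
  have hαz : α • z ∈ 𝔷 := 𝔷.smul_mem α hz
  have hαu := Submodule.smul_mem_orthogonal_restrictScalars hherm 𝔷 (conj α) hu
  refine Submodule.eq_of_forall_real_inner_eq _ (hJmem _ hαz u hu) (hJmem z hz _ hαu) ?_
  intro v hv
  rw [hJdef _ hαz u hu v hv, hJdef z hz _ hαu v hv, hbil,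
    real_inner_smul_left_eq_inner_conj_smul_right hherm]

theorem Jw_isometry_of_unit_multiple_general
    {G : Type*} [LieRing G]
    [NormedAddCommGroup G] [InnerProductSpace ℝ G]
    [Module ℂ G] [IsScalarTower ℝ ℂ G]
    (hbil : ∀ (a : ℂ) (x y : G), ⁅a • x, y⁆ = a • ⁅x, y⁆)
    (hherm : ∀ x y : G, ⟪(Complex.I : ℂ) • x, (Complex.I : ℂ) • y⟫ = ⟪x, y⟫)
    (𝔷 : Submodule ℂ G)
    (J : G → G → G)
    (hJmem : ∀ z ∈ 𝔷, ∀ u ∈ (𝔷.restrictScalars ℝ)ᗮ, J z u ∈ (𝔷.restrictScalars ℝ)ᗮ)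
    (hJdef : ∀ z ∈ 𝔷, ∀ u ∈ (𝔷.restrictScalars ℝ)ᗮ, ∀ v ∈ (𝔷.restrictScalars ℝ)ᗮ,
      ⟪J z u, v⟫ = ⟪z, ⁅u, v⁆⟫)
    (z : G) (hz : z ∈ 𝔷)
    (hziso : ∀ u ∈ (𝔷.restrictScalars ℝ)ᗮ, ∀ v ∈ (𝔷.restrictScalars ℝ)ᗮ,
      ⟪J z u, J z v⟫ = ⟪u, v⟫) :
    ∀ α : ℂ, ‖α‖ = 1 →
      ∀ u ∈ (𝔷.restrictScalars ℝ)ᗮ, ∀ v ∈ (𝔷.restrictScalars ℝ)ᗮ,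
        ⟪J (α • z) u, J (α • z) v⟫ = ⟪u, v⟫ := by
  intro α hα u hu v hv
  have hJα := fun x (hx : x ∈ (𝔷.restrictScalars ℝ)ᗮ) ↦
    J_smul_apply_eq_J_apply_conj_smul hbil hherm 𝔷 J hJmem hJdef hz α hx
  have hmem := fun x (hx : x ∈ (𝔷.restrictScalars ℝ)ᗮ) ↦
    Submodule.smul_mem_orthogonal_restrictScalars hherm 𝔷 (conj α) hx
  have hconj : ‖conj α‖ = 1 := by rwa [Complex.norm_conj]
  rw [hJα u hu, hJα v hv, hziso _ (hmem u hu) _ (hmem v hv),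
    real_inner_smul_smul_of_norm_eq_one hherm hconj]

/-- Let `G` be a finite-dimensional complex Lie algebra with a Hermitian real
inner product, center `𝔷`, `𝔳 = 𝔷ᗮ` and `J` as usual.  If `z ∈ 𝔷` is a unit
vector with `J z` an isometry of `𝔳`, then for every `w = α • z` with
`α : ℂ`, `|α| = 1` (equivalently `‖w‖ = 1`), the map `J w` is also an isometry
of `𝔳`. -/
theorem Jw_isometry_of_unit_multiple
    {G : Type*} [LieRing G]
    [NormedAddCommGroup G] [InnerProductSpace ℝ G]
    [Module ℂ G] [IsScalarTower ℝ ℂ G] [FiniteDimensional ℂ G]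
    (hbil : ∀ (a : ℂ) (x y : G), ⁅a • x, y⁆ = a • ⁅x, y⁆)
    (hherm : ∀ x y : G, ⟪(Complex.I : ℂ) • x, (Complex.I : ℂ) • y⟫ = ⟪x, y⟫)
    (𝔷 : Submodule ℂ G) (h𝔷 : ∀ x : G, x ∈ 𝔷 ↔ ∀ y : G, ⁅x, y⁆ = 0)
    (J : G → G → G)
    (hJmem : ∀ z ∈ 𝔷, ∀ u ∈ (𝔷.restrictScalars ℝ)ᗮ, J z u ∈ (𝔷.restrictScalars ℝ)ᗮ)
    (hJdef : ∀ z ∈ 𝔷, ∀ u ∈ (𝔷.restrictScalars ℝ)ᗮ, ∀ v ∈ (𝔷.restrictScalars ℝ)ᗮ,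
      ⟪J z u, v⟫ = ⟪z, ⁅u, v⁆⟫)
    (z : G) (hz : z ∈ 𝔷) (hz1 : ‖z‖ = 1)
    (hziso : ∀ u ∈ (𝔷.restrictScalars ℝ)ᗮ, ∀ v ∈ (𝔷.restrictScalars ℝ)ᗮ,
      ⟪J z u, J z v⟫ = ⟪u, v⟫) :
    ∀ α : ℂ, ‖α‖ = 1 →
      ∀ u ∈ (𝔷.restrictScalars ℝ)ᗮ, ∀ v ∈ (𝔷.restrictScalars ℝ)ᗮ,
        ⟪J (α • z) u, J (α • z) v⟫ = ⟪u, v⟫ :=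
  Jw_isometry_of_unit_multiple_general hbil hherm 𝔷 J hJmem hJdef z hz hziso
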